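/- Let f(x,t) = Σ_n a_n e_n(x) e(n²t) on B × [0,1) with Σ_n n^{2s}|a_n|² ≤ 1 for some s > 1/2. Then ‖f‖_{L³_x L^∞_t} ≤ C(s), i.e. the function x ↦ sup_{t∈[0,1)} |f(x,t)| has L³ norm over B bounded by a constant depending only on s. -/

import Mathlib

open Real MeasureTheory

noncomputable abbrev E3 := EuclideanSpace ℝ (Fin 3)

/-- The open unit ball in `ℝ³`. -/
noncomputable def B3 : Set E3 := Metric.ball 0 1

open Classical in
/-- The radial eigenfunction `e_n(x) = sin(nπ|x|)/|x|`, extended by `e_n(0) = nπ`. -/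
noncomputable def eFun (n : ℕ) (x : E3) : ℝ :=
  if x = 0 then n * Real.pi else Real.sin (n * Real.pi * ‖x‖) / ‖x‖

/-- The character `e(θ) = e^{2πiθ}` evaluated at `θ = m t`. -/
noncomputable def eT (m : ℤ) (t : ℝ) : ℂ :=
  Complex.exp (2 * Real.pi * Complex.I * (m : ℂ) * (t : ℂ))

/-! Since `|sin u| ≤ u ^ θ` for `θ ∈ [0, 1]`, we have `|e_n(x)| ≤ (nπ)^θ |x|^(θ-1)`. Taking
`0 < θ < s - 1/2`, Cauchy–Schwarz against the weights `n^(2s)` bounds `|f(x,t)|` by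
`C(s) |x|^(θ-1)` uniformly in `t`, and `|x|^(3θ-3)` is integrable on the unit ball of `ℝ³`. -/

lemma abs_sin_le_rpow {θ u : ℝ} (hθ0 : 0 ≤ θ) (hθ1 : θ ≤ 1) (hu : 0 ≤ u) :
    |sin u| ≤ u ^ θ := by
  rcases le_total u 1 with hu1 | hu1
  · calc |sin u| ≤ u := abs_sin_le_abs.trans_eq (abs_of_nonneg hu)
      _ = u ^ (1 : ℝ) := (rpow_one u).symm
      _ ≤ u ^ θ := rpow_le_rpow_of_exponent_ge' hu hu1 hθ0 hθ1
  · exact (abs_sin_le_one u).trans (one_le_rpow hu1 hθ0)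

lemma abs_eFun_succ_le {θ : ℝ} (hθ0 : 0 ≤ θ) (hθ1 : θ ≤ 1) (n : ℕ) {x : E3} (hx : x ≠ 0) :
    |eFun (n + 1) x| ≤ ((n : ℝ) + 1) ^ θ * (π ^ θ * ‖x‖ ^ (θ - 1)) := by
  have hx' : 0 < ‖x‖ := norm_pos_iff.2 hx
  rw [eFun, if_neg hx, abs_div, abs_of_pos hx', div_le_iff₀ hx']
  calc |sin ((n + 1 : ℕ) * π * ‖x‖)| ≤ ((n + 1 : ℕ) * π * ‖x‖) ^ θ :=
        abs_sin_le_rpow hθ0 hθ1 (by positivity)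
    _ = ((n : ℝ) + 1) ^ θ * (π ^ θ * ‖x‖ ^ (θ - 1)) * ‖x‖ := by
        rw [mul_rpow (by positivity) hx'.le, mul_rpow (by positivity) pi_pos.le,
          rpow_sub_one hx'.ne']
        push_cast
        field_simp

lemma norm_eT (m : ℤ) (t : ℝ) : ‖eT m t‖ = 1 := by
  rw [eT, Complex.norm_exp]
  simp [Complex.mul_re, Complex.mul_im]

lemma norm_tsum_mul_le_sqrt_mul_sqrt {ι : Type*} {a c : ι → ℂ} {b w : ι → ℝ}
    (hw : ∀ i, 0 < w i) (hc : ∀ i, ‖c i‖ = 1)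
    (ha : Summable fun i => w i * ‖a i‖ ^ 2) (hb : Summable fun i => b i ^ 2 / w i) :
    ‖∑' i, a i * b i * c i‖ ≤ √(∑' i, w i * ‖a i‖ ^ 2) * √(∑' i, b i ^ 2 / w i) := by
  set f : ι → ℝ := fun i => √(w i) * ‖a i‖
  set g : ι → ℝ := fun i => |b i| / √(w i)
  have hf : ∀ i, f i ^ (2 : ℝ) = w i * ‖a i‖ ^ 2 := fun i => by
    simp only [f, rpow_two, mul_pow, sq_sqrt (hw i).le]
  have hg : ∀ i, g i ^ (2 : ℝ) = b i ^ 2 / w i := fun i => by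
    simp only [g, rpow_two, div_pow, sq_abs, sq_sqrt (hw i).le]
  have hfg : ∀ i, ‖a i * b i * c i‖ = f i * g i := fun i => by
    have := (sqrt_pos.2 (hw i)).ne'
    simp only [f, g, norm_mul, hc, Complex.norm_real, Real.norm_eq_abs]
    field_simp
  obtain ⟨hsum, hle⟩ := summable_and_inner_le_Lp_mul_Lq_tsum_of_nonneg (f := f) (g := g)
    Real.HolderConjugate.two_two (fun i => by positivity) (fun i => by positivity)
    (by simpa only [hf] using ha) (by simpa only [hg] using hb)
  calc ‖∑' i, a i * b i * c i‖ ≤ ∑' i, ‖a i * b i * c i‖ :=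
        norm_tsum_le_tsum_norm (by simpa only [hfg] using hsum)
    _ = ∑' i, f i * g i := by simp only [hfg]
    _ ≤ _ := hle
    _ = _ := by simp only [hf, hg, sqrt_eq_rpow]

section Integration

variable {E : Type*} [NormedAddCommGroup E] [NormedSpace ℝ E] [FiniteDimensional ℝ E]
  [Nontrivial E] [MeasurableSpace E] [BorelSpace E] {μ : Measure E} [μ.IsAddHaarMeasure]

lemma integrableOn_ball_norm_rpow {α r : ℝ} (hα : α < Module.finrank ℝ E) :
    IntegrableOn (fun x : E => ‖x‖ ^ (-α)) (Metric.ball 0 r) μ :=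
  integrableOn_ball_of_norm_le_rpow (C := 1) Module.finrank_pos hα
    (.of_forall fun x => by rw [one_mul, norm_of_nonneg (by positivity)])
    (measurable_norm.pow_const _).aestronglyMeasurable

lemma setIntegral_ball_le_of_le_norm_rpow {F : E → ℝ} {C α r : ℝ}
    (hα : α < Module.finrank ℝ E) (hF0 : ∀ x, 0 ≤ F x) (hF : ∀ x ≠ 0, F x ≤ C * ‖x‖ ^ (-α)) :
    ∫ x in Metric.ball 0 r, F x ∂μ ≤ C * ∫ x in Metric.ball 0 r, ‖x‖ ^ (-α) ∂μ := by
  rw [← integral_const_mul]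
  refine integral_mono_of_nonneg (.of_forall hF0)
    ((integrableOn_ball_norm_rpow hα).const_mul C) ?_
  filter_upwards [ae_restrict_of_ae (μ.ae_ne 0)] with x hx
  exact hF x hx

end Integration

lemma iSup_norm_tsum_eFun_le {s θ : ℝ} (hθ0 : 0 ≤ θ) (hθ1 : θ ≤ 1) (hθs : 2 * θ - 2 * s < -1)
    {a : ℕ → ℂ} (ha : Summable fun n : ℕ => ((n : ℝ) + 1) ^ (2 * s) * ‖a n‖ ^ 2)
    (ha1 : ∑' n : ℕ, ((n : ℝ) + 1) ^ (2 * s) * ‖a n‖ ^ 2 ≤ 1) {x : E3} (hx : x ≠ 0) :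
    ⨆ t : Set.Ico (0 : ℝ) 1,
        ‖∑' n : ℕ, a n * ((eFun (n + 1) x : ℝ) : ℂ) * eT (((n : ℤ) + 1) ^ 2) t‖
      ≤ √(∑' n : ℕ, ((n : ℝ) + 1) ^ (2 * θ - 2 * s)) * (π ^ θ * ‖x‖ ^ (θ - 1)) := by
  have : Nonempty (Set.Ico (0 : ℝ) 1) := (Set.nonempty_Ico.2 zero_lt_one).to_subtype
  set K := π ^ θ * ‖x‖ ^ (θ - 1)
  have hS : Summable fun n : ℕ => ((n : ℝ) + 1) ^ (2 * θ - 2 * s) := by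
    simpa using (summable_nat_add_iff 1).2 (Real.summable_nat_rpow.2 hθs)
  have hb : ∀ n : ℕ, eFun (n + 1) x ^ 2 / ((n : ℝ) + 1) ^ (2 * s)
      ≤ ((n : ℝ) + 1) ^ (2 * θ - 2 * s) * K ^ 2 := fun n => by
    have hn : (0 : ℝ) < n + 1 := by positivity
    rw [rpow_sub hn, div_mul_eq_mul_div, div_le_div_iff_of_pos_right (by positivity),
      mul_comm 2 θ, rpow_mul hn.le, rpow_two, ← mul_pow, ← sq_abs]
    exact pow_le_pow_left₀ (abs_nonneg _) (abs_eFun_succ_le hθ0 hθ1 n hx) 2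
  have hbsum := Summable.of_nonneg_of_le (fun n => by positivity) hb (hS.mul_right _)
  refine ciSup_le fun t => (norm_tsum_mul_le_sqrt_mul_sqrt (fun n => by positivity)
    (fun n => norm_eT _ _) ha hbsum).trans ?_
  calc _ ≤ √1 * √(∑' n : ℕ, ((n : ℝ) + 1) ^ (2 * θ - 2 * s) * K ^ 2) := by
        gcongr
        · exact hS.mul_right _
        · exact hb _
    _ = _ := by
        rw [tsum_mul_right, sqrt_one, one_mul, sqrt_mul (tsum_nonneg fun n => by positivity),
          sqrt_sq (by positivity)]

theorem L3xLinf_bound (s : ℝ) (hs : 1 / 2 < s) :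
    ∃ C > 0, ∀ a : ℕ → ℂ,
      Summable (fun n : ℕ => ((n : ℝ) + 1) ^ (2 * s) * ‖a n‖ ^ 2) →
      (∑' n : ℕ, ((n : ℝ) + 1) ^ (2 * s) * ‖a n‖ ^ 2) ≤ 1 →
      (∫ x in B3, (⨆ t : Set.Ico (0 : ℝ) 1,
          ‖∑' n : ℕ, a n * ((eFun (n + 1) x : ℝ) : ℂ) * eT (((n : ℤ) + 1) ^ 2) t‖)
        ^ (3 : ℝ)) ^ ((1 : ℝ) / 3) ≤ C := by
  obtain ⟨θ, hθ0, hθ1, hθs⟩ : ∃ θ : ℝ, 0 < θ ∧ θ ≤ 1 ∧ 2 * θ - 2 * s < -1 := by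
    have := min_le_left (s - 1 / 2) 1
    have := min_le_right (s - 1 / 2) 1
    exact ⟨min (s - 1 / 2) 1 / 2, by positivity, by linarith, by linarith⟩
  set M := √(∑' n : ℕ, ((n : ℝ) + 1) ^ (2 * θ - 2 * s)) * π ^ θ
  set I := ∫ x in B3, ‖x‖ ^ (-(3 - 3 * θ))
  refine ⟨max ((M ^ 3 * I) ^ ((1 : ℝ) / 3)) 1, by positivity, fun a ha ha1 => ?_⟩
  set F : E3 → ℝ := fun x => (⨆ t : Set.Ico (0 : ℝ) 1,
    ‖∑' n : ℕ, a n * ((eFun (n + 1) x : ℝ) : ℂ) * eT (((n : ℤ) + 1) ^ 2) t‖) ^ (3 : ℝ)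
  have hF0 : ∀ x, 0 ≤ F x := fun x => rpow_nonneg (Real.iSup_nonneg fun _ => norm_nonneg _) _
  have hF : ∀ x ≠ 0, F x ≤ M ^ 3 * ‖x‖ ^ (-(3 - 3 * θ)) := fun x hx =>
    calc F x ≤ (M * ‖x‖ ^ (θ - 1)) ^ (3 : ℝ) := by
          refine rpow_le_rpow (Real.iSup_nonneg fun _ => norm_nonneg _) ?_ (by norm_num)
          simpa only [M, mul_assoc] using iSup_norm_tsum_eFun_le hθ0.le hθ1 hθs ha ha1 hx
      _ = M ^ 3 * ‖x‖ ^ (-(3 - 3 * θ)) := by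
          rw [mul_rpow (by positivity) (by positivity), ← rpow_mul (norm_nonneg x)]
          norm_cast
          ring_nf
  have hdim : 3 - 3 * θ < Module.finrank ℝ E3 := by
    rw [finrank_euclideanSpace_fin]
    push_cast
    linarith
  calc (∫ x in B3, F x) ^ ((1 : ℝ) / 3) ≤ (M ^ 3 * I) ^ ((1 : ℝ) / 3) :=
        rpow_le_rpow (integral_nonneg hF0) (setIntegral_ball_le_of_le_norm_rpow hdim hF0 hF)
          (by norm_num)
    _ ≤ _ := le_max_left _ _
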